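/- arXiv:2505.01377 — 3 statements merged into one kernel-verified Lean document; each statement's English description precedes it below -/
import Mathlib

section
/- Let K : ℝⁿ → ℝ be continuous, coercive (K(p) → ∞ as |p| → ∞), with K(0) = 0 = min K, and let M > 0. Set A = {p ∈ ℝⁿ : K(p) ≤ M}. Suppose the following condition (H4) holds: for every η > 0 there exists ψ_η > 0 such that whenever K(p) − M ≤ 0 and K(p+q) − M ≥ η for some p, q ∈ ℝⁿ, one has K(p+sq) − M ≥ s·(K(p+q) − M) + ψ_η·(s−1) for all s ≥ 1. Then A is a convex subset of ℝⁿ. -/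
/-!
If `a, b ∈ A` but a point `c = a + u • (b - a)` (`0 < u ≤ 1`) of the segment lies outside `A`, apply
(H4) to `p = a`, `q = c - a` and `s = 1 / u`: then `p + s • q = b`, and (H4) forces
`K b - M ≥ s (K c - M) > 0`, contradicting `b ∈ A`.
-/

theorem convex_of_forall_add_smul_notMem {𝕜 E : Type*} [Field 𝕜] [LinearOrder 𝕜]
    [IsStrictOrderedRing 𝕜] [AddCommGroup E] [Module 𝕜 E] {S : Set E}
    (hS : ∀ p ∈ S, ∀ q, p + q ∉ S → ∀ s : 𝕜, 1 ≤ s → p + s • q ∉ S) :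
    Convex 𝕜 S := by
  intro x hx y hy a b ha hb hab
  rcases hb.eq_or_lt with rfl | hb
  · rw [add_zero] at hab
    simpa [hab] using hx
  by_contra hxy
  have hq : x + b • (y - x) = a • x + b • y := by
    rw [eq_sub_of_add_eq hab]; module
  refine hS x hx (b • (y - x)) (hq ▸ hxy) b⁻¹ (one_le_inv₀ hb |>.2 (by linarith)) ?_
  rwa [smul_smul, inv_mul_cancel₀ hb.ne', one_smul, add_sub_cancel]

def ConditionH4 {E : Type*} [AddCommGroup E] [Module ℝ E] (K : E → ℝ) (M : ℝ) : Prop :=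
  ∀ η : ℝ, 0 < η → ∃ ψ : ℝ, 0 < ψ ∧ ∀ p q : E, K p - M ≤ 0 → η ≤ K (p + q) - M →
    ∀ s : ℝ, 1 ≤ s → s * (K (p + q) - M) + ψ * (s - 1) ≤ K (p + s • q) - M

theorem ConditionH4.lt_apply_add_smul {E : Type*} [AddCommGroup E] [Module ℝ E]
    {K : E → ℝ} {M : ℝ} (hH4 : ConditionH4 K M)
    {p q : E} (hp : K p ≤ M) (hpq : M < K (p + q)) {s : ℝ} (hs : 1 ≤ s) :
    M < K (p + s • q) := by
  obtain ⟨ψ, hψ, hH⟩ := hH4 (K (p + q) - M) (by linarith)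
  have h := hH p q (by linarith) le_rfl s hs
  nlinarith [mul_nonneg hψ.le (sub_nonneg.2 hs)]

theorem stmt_4_general {n : ℕ} (K : EuclideanSpace ℝ (Fin n) → ℝ) (M : ℝ)
    (hH4 : ∀ η : ℝ, 0 < η → ∃ ψ : ℝ, 0 < ψ ∧
      ∀ p q : EuclideanSpace ℝ (Fin n), K p - M ≤ 0 → η ≤ K (p + q) - M →
        ∀ s : ℝ, 1 ≤ s → s * (K (p + q) - M) + ψ * (s - 1) ≤ K (p + s • q) - M) :
    Convex ℝ {p : EuclideanSpace ℝ (Fin n) | K p ≤ M} :=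
  convex_of_forall_add_smul_notMem fun _ hp _ hpq _ hs =>
    (ConditionH4.lt_apply_add_smul hH4 hp (not_le.1 hpq) hs).not_ge

/-- Under condition (H4), the sublevel set `A = {K ≤ M}` is convex. -/
theorem stmt_4 {n : ℕ} (K : EuclideanSpace ℝ (Fin n) → ℝ) (M : ℝ) (hM : 0 < M)
    (hKcont : Continuous K)
    (hKcoer : Filter.Tendsto K (Filter.cocompact _) Filter.atTop)
    (hK0 : K 0 = 0) (hKmin : ∀ p, 0 ≤ K p)
    (hH4 : ∀ η : ℝ, 0 < η → ∃ ψ : ℝ, 0 < ψ ∧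
      ∀ p q : EuclideanSpace ℝ (Fin n), K p - M ≤ 0 → η ≤ K (p + q) - M →
        ∀ s : ℝ, 1 ≤ s → s * (K (p + q) - M) + ψ * (s - 1) ≤ K (p + s • q) - M) :
    Convex ℝ {p : EuclideanSpace ℝ (Fin n) | K p ≤ M} :=
  stmt_4_general K M hH4
end

section
/- Let K : ℝⁿ → ℝ be continuous, coercive, with K(0) = 0 = min K, and let M > 0. Assume condition (H4): for every η > 0 there exists ψ_η > 0 such that whenever there exists V ∈ [0, M] with K(p) − V ≤ 0 and K(p+q) − V ≥ η, then K(p+sq) − V ≥ s·(K(p+q) − V) + ψ_η·(s−1) for all s ≥ 1. Then K is convex on the set A = {p : K(p) ≤ M}: for all p, r ∈ A, K((p+r)/2) ≤ (K(p) + K(r))/2. -/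
/-!
If `K` rose above the chord at the midpoint `m` of `p` and `r`, say `K p ≤ K r`, then the
growth condition, applied with level `V = K p` along the ray from `p` through `m` at `s = 2`,
would push `K r` strictly above `2 K m - K p`, i.e. `K m` strictly below the chord.
-/

open Set

section GrowthCondition

variable {E : Type*} [AddCommGroup E] [Module ℝ E]

/-- Condition (H4) with levels `V ∈ [0, M]`. -/
def GrowthCondition (K : E → ℝ) (M : ℝ) : Prop :=
  ∀ η : ℝ, 0 < η → ∃ ψ : ℝ, 0 < ψ ∧
    ∀ V ∈ Icc (0 : ℝ) M, ∀ p q : E, K p - V ≤ 0 → η ≤ K (p + q) - V →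
      ∀ s : ℝ, 1 ≤ s → s * (K (p + q) - V) + ψ * (s - 1) ≤ K (p + s • q) - V

variable {K : E → ℝ} {M : ℝ}

theorem GrowthCondition.midpoint_le_of_le (hK : GrowthCondition K M) {p r : E}
    (hp : K p ∈ Icc 0 M) (hpr : K p ≤ K r) :
    K ((1 / 2 : ℝ) • (p + r)) ≤ (K p + K r) / 2 := by
  by_contra! hlt
  set m := (1 / 2 : ℝ) • (p + r)
  obtain ⟨ψ, hψ, hgrow⟩ := hK (K m - K p) (by linarith)
  have hm : p + (m - p) = m := add_sub_cancel p m
  have hr : p + (2 : ℝ) • (m - p) = r := by simp only [m]; module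
  have := hgrow (K p) hp p (m - p) (sub_self _).le (by rw [hm]) 2 one_le_two
  rw [hm, hr] at this
  linarith

theorem GrowthCondition.midpoint_le (hK : GrowthCondition K M) (hK0 : ∀ p, 0 ≤ K p)
    {p r : E} (hp : K p ≤ M) (hr : K r ≤ M) :
    K ((1 / 2 : ℝ) • (p + r)) ≤ (K p + K r) / 2 := by
  rcases le_total (K p) (K r) with hpr | hrp
  · exact hK.midpoint_le_of_le ⟨hK0 p, hp⟩ hpr
  · simpa only [add_comm] using hK.midpoint_le_of_le ⟨hK0 r, hr⟩ hrp

end GrowthCondition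

theorem stmt_5_general {n : ℕ} (K : EuclideanSpace ℝ (Fin n) → ℝ) (M : ℝ)
    (hKmin : ∀ p, 0 ≤ K p)
    (hH4 : ∀ η : ℝ, 0 < η → ∃ ψ : ℝ, 0 < ψ ∧
      ∀ V ∈ Set.Icc (0 : ℝ) M, ∀ p q : EuclideanSpace ℝ (Fin n),
        K p - V ≤ 0 → η ≤ K (p + q) - V →
        ∀ s : ℝ, 1 ≤ s → s * (K (p + q) - V) + ψ * (s - 1) ≤ K (p + s • q) - V) :
    ∀ p r : EuclideanSpace ℝ (Fin n), K p ≤ M → K r ≤ M →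
      K ((1 / 2 : ℝ) • (p + r)) ≤ (K p + K r) / 2 :=
  fun _ _ hp hr => GrowthCondition.midpoint_le hH4 hKmin hp hr

/-- Under condition (H4) (with intermediate values `V ∈ [0,M]`),
`K` is midpoint convex on `A = {K ≤ M}`. -/
theorem stmt_5 {n : ℕ} (K : EuclideanSpace ℝ (Fin n) → ℝ) (M : ℝ) (hM : 0 < M)
    (hKcont : Continuous K)
    (hKcoer : Filter.Tendsto K (Filter.cocompact _) Filter.atTop)
    (hK0 : K 0 = 0) (hKmin : ∀ p, 0 ≤ K p)
    (hH4 : ∀ η : ℝ, 0 < η → ∃ ψ : ℝ, 0 < ψ ∧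
      ∀ V ∈ Set.Icc (0 : ℝ) M, ∀ p q : EuclideanSpace ℝ (Fin n),
        K p - V ≤ 0 → η ≤ K (p + q) - V →
        ∀ s : ℝ, 1 ≤ s → s * (K (p + q) - V) + ψ * (s - 1) ≤ K (p + s • q) - V) :
    ∀ p r : EuclideanSpace ℝ (Fin n), K p ≤ M → K r ≤ M →
      K ((1 / 2 : ℝ) • (p + r)) ≤ (K p + K r) / 2 :=
  stmt_5_general K M hKmin hH4
end

section
/- Under the same hypotheses as in the previous statement (K continuous, coercive, K(0)=0=min K, condition (H4) with values V ∈ [0,M]), for every p ∈ A = {K ≤ M} and every r ∉ A one has the strict midpoint inequality K((p+r)/2) < (K(p) + K(r))/2. -/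
/-! If `K` exceeded the chord value at the midpoint `m` of `p` and `r`, then `K m > K p`, and the
growth condition at level `K p`, applied to the step `q = (r - p) / 2` with `s = 2`, gives
`2 (K m - K p) + ψ ≤ K r - K p` with `ψ > 0`, contradicting `K m ≥ (K p + K r) / 2`. -/

theorem midpoint_lt_of_superlinear_growth {E : Type*} [AddCommGroup E] [Module ℝ E]
    {K : E → ℝ} {p r : E} (hpr : K p < K r)
    (hgrowth : ∀ η : ℝ, 0 < η → ∃ ψ : ℝ, 0 < ψ ∧ ∀ q : E, η ≤ K (p + q) - K p →
      ∀ s : ℝ, 1 ≤ s → s * (K (p + q) - K p) + ψ * (s - 1) ≤ K (p + s • q) - K p) :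
    K ((1 / 2 : ℝ) • (p + r)) < (K p + K r) / 2 := by
  set m := (1 / 2 : ℝ) • (p + r)
  rcases le_or_gt (K m) (K p) with hmp | hpm
  · linarith
  obtain ⟨ψ, hψ, hstep⟩ := hgrowth (K m - K p) (sub_pos.mpr hpm)
  have half_step : p + (1 / 2 : ℝ) • (r - p) = m := by module
  have full_step : p + (2 : ℝ) • ((1 / 2 : ℝ) • (r - p)) = r := by module
  have h := hstep ((1 / 2 : ℝ) • (r - p)) (by rw [half_step]) 2 one_le_two
  rw [half_step, full_step] at h
  linarith

theorem stmt_6_general {n : ℕ} (K : EuclideanSpace ℝ (Fin n) → ℝ) (M : ℝ)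
    (hKmin : ∀ p, 0 ≤ K p)
    (hH4 : ∀ η : ℝ, 0 < η → ∃ ψ : ℝ, 0 < ψ ∧
      ∀ V ∈ Set.Icc (0 : ℝ) M, ∀ p q : EuclideanSpace ℝ (Fin n),
        K p - V ≤ 0 → η ≤ K (p + q) - V →
        ∀ s : ℝ, 1 ≤ s → s * (K (p + q) - V) + ψ * (s - 1) ≤ K (p + s • q) - V) :
    ∀ p r : EuclideanSpace ℝ (Fin n), K p ≤ M → M < K r →
      K ((1 / 2 : ℝ) • (p + r)) < (K p + K r) / 2 := by
  intro p r hp hr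
  refine midpoint_lt_of_superlinear_growth (hp.trans_lt hr) fun η hη => ?_
  obtain ⟨ψ, hψ, hgrowth⟩ := hH4 η hη
  exact ⟨ψ, hψ, fun q => hgrowth (K p) ⟨hKmin p, hp⟩ p q (sub_self _).le⟩

/-- Under condition (H4), for `p ∈ A = {K ≤ M}` and `r ∉ A`, the strict
midpoint inequality holds. -/
theorem stmt_6 {n : ℕ} (K : EuclideanSpace ℝ (Fin n) → ℝ) (M : ℝ) (hM : 0 < M)
    (hKcont : Continuous K)
    (hKcoer : Filter.Tendsto K (Filter.cocompact _) Filter.atTop)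
    (hK0 : K 0 = 0) (hKmin : ∀ p, 0 ≤ K p)
    (hH4 : ∀ η : ℝ, 0 < η → ∃ ψ : ℝ, 0 < ψ ∧
      ∀ V ∈ Set.Icc (0 : ℝ) M, ∀ p q : EuclideanSpace ℝ (Fin n),
        K p - V ≤ 0 → η ≤ K (p + q) - V →
        ∀ s : ℝ, 1 ≤ s → s * (K (p + q) - V) + ψ * (s - 1) ≤ K (p + s • q) - V) :
    ∀ p r : EuclideanSpace ℝ (Fin n), K p ≤ M → M < K r →
      K ((1 / 2 : ℝ) • (p + r)) < (K p + K r) / 2 :=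
  stmt_6_general K M hKmin hH4
end
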